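/- arXiv:1506.03806 — 6 statements merged into one kernel-verified Lean document; each statement's English description precedes it below -/
import Mathlib

section
/- Fix β > 0 and let μ be a Borel probability measure on ℝ (the law of a random variable A) with the following max-stability property: for every integer k ≥ 1 and every s ∈ ℝ, μ((−∞, s]) = (μ((−∞, k^β · s]))^k (equivalently, if A₁,…,A_k are i.i.d. with law μ, then k^{−β}·max_{1≤i≤k} A_i again has law μ). Then there exists a real number t ≤ 0 such that μ((−∞, r]) = exp(t · r^{−1/β}) for every r > 0. -/
/-!
With `F` the distribution function, put `G x = F (x ^ β)`. Stability reads `G x = G (k x) ^ k`,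
which forces `G (m / k) = G 1 ^ (k / m)` on the positive rationals, and `G 1 > 0` because
`F → 1` at `+∞`. A function monotone on `(0, ∞)` that agrees with the continuous
`x ↦ G 1 ^ x⁻¹` on a dense set agrees with it on all of `(0, ∞)`; take `t = log G 1`.
-/

open Set Filter Topology MeasureTheory ProbabilityTheory

theorem MonotoneOn.eqOn_of_dense_of_continuousOn {α β : Type*} [TopologicalSpace α] [LinearOrder α]
    [OrderTopology α] [DenselyOrdered α] [NoMaxOrder α] [TopologicalSpace β] [PartialOrder β]
    [OrderClosedTopology β] {f g : α → β} {s : Set α} {a : α}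
    (hf : MonotoneOn f (Ioi a)) (hg : ContinuousOn g (Ioi a)) (hs : Dense s)
    (hfg : EqOn f g (s ∩ Ioi a)) : EqOn f g (Ioi a) := by
  intro x hx
  have hgx : ContinuousWithinAt g (Ioi a) x := hg x hx
  apply le_antisymm
  · have hx_mem : x ∈ closure (Ioi x ∩ s) :=
      closure_minimal (hs.open_subset_closure_inter isOpen_Ioi) isClosed_closure
        (by rw [closure_Ioi]; exact self_mem_Ici)
    refine ContinuousWithinAt.closure_le (f := fun _ => f x) hx_mem continuousWithinAt_const
      (hgx.mono fun y hy => lt_trans hx hy.1) fun y ⟨hxy, hy⟩ => ?_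
    rw [← hfg ⟨hy, lt_trans hx hxy⟩]
    exact hf hx (lt_trans hx hxy) hxy.le
  · have hx_mem : x ∈ closure (Ioo a x ∩ s) :=
      closure_minimal (hs.open_subset_closure_inter isOpen_Ioo) isClosed_closure
        (by rw [closure_Ioo hx.ne]; exact right_mem_Icc.2 hx.le)
    refine ContinuousWithinAt.closure_le (g := fun _ => f x) hx_mem
      (hgx.mono fun y hy => hy.1.1) continuousWithinAt_const fun y ⟨hxy, hy⟩ => ?_
    rw [← hfg ⟨hy, hxy.1⟩]
    exact hf hxy.1 hx hxy.2.le

theorem eq_rpow_inv_of_eq_pow_natCast_mul {G : ℝ → ℝ} (hG0 : ∀ x, 0 < x → 0 ≤ G x)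
    (hG : ∀ k : ℕ, 1 ≤ k → ∀ x, 0 < x → G x = G (k * x) ^ k) {q : ℚ} (hq : 0 < q) :
    G q = G 1 ^ (q : ℝ)⁻¹ := by
  have hnat : ∀ m : ℕ, 1 ≤ m → G m = G 1 ^ (m : ℝ)⁻¹ := fun m hm => by
    rw [hG m hm 1 one_pos, mul_one, Real.pow_rpow_inv_natCast (hG0 _ (by positivity)) (by omega)]
  obtain ⟨m, hm⟩ := Int.eq_ofNat_of_zero_le (Rat.num_nonneg.2 hq.le)
  have hm1 : 1 ≤ m := by have := Rat.num_pos.2 hq; omega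
  have hq_eq : (q : ℝ) = m / q.den := by rw [Rat.cast_def, hm, Int.cast_natCast]
  calc G q = G m ^ q.den := by
        rw [hG q.den q.pos _ (by exact_mod_cast hq), hq_eq, mul_div_cancel₀ _ (by positivity)]
    _ = G 1 ^ (q : ℝ)⁻¹ := by
        rw [hnat m hm1, ← Real.rpow_natCast, ← Real.rpow_mul (hG0 1 one_pos), hq_eq, inv_div,
          div_eq_inv_mul]

def IsMaxStable (β : ℝ) (F : ℝ → ℝ) : Prop :=
  ∀ k : ℕ, 1 ≤ k → ∀ s, F s = F ((k : ℝ) ^ β * s) ^ k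

namespace IsMaxStable

variable {β : ℝ} {μ : Measure ℝ}

theorem cdf_one_pos (hβ : 0 < β) (hμ : IsMaxStable β (cdf μ)) : 0 < cdf μ 1 := by
  refine (cdf_nonneg μ 1).lt_of_ne fun h => (zero_ne_one : (0 : ℝ) ≠ 1) ?_
  have hzero : ∀ k : ℕ, 1 ≤ k → cdf μ ((k : ℝ) ^ β) = 0 := fun k hk =>
    pow_eq_zero_iff (n := k) (by omega) |>.1 (by rw [← mul_one ((k : ℝ) ^ β), ← hμ k hk, h])
  have hlim : Tendsto (fun k : ℕ => cdf μ ((k : ℝ) ^ β)) atTop (𝓝 1) :=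
    (tendsto_cdf_atTop μ).comp ((tendsto_rpow_atTop hβ).comp tendsto_natCast_atTop_atTop)
  exact tendsto_nhds_unique tendsto_const_nhds (hlim.congr' (eventually_atTop.2 ⟨1, hzero⟩))

theorem cdf_eq_rpow (hβ : 0 < β) (hμ : IsMaxStable β (cdf μ)) {r : ℝ} (hr : 0 < r) :
    cdf μ r = cdf μ 1 ^ r ^ (-1 / β) := by
  set G : ℝ → ℝ := fun x => cdf μ (x ^ β)
  have hG_mono : MonotoneOn G (Ioi 0) := fun x hx y _ hxy =>
    monotone_cdf μ (Real.rpow_le_rpow (le_of_lt hx) hxy hβ.le)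
  have hG : ∀ k : ℕ, 1 ≤ k → ∀ x, 0 < x → G x = G (k * x) ^ k := fun k hk x hx => by
    simp only [G, Real.mul_rpow k.cast_nonneg hx.le]
    exact hμ k hk _
  have hcont : ContinuousOn (fun x : ℝ => cdf μ 1 ^ x⁻¹) (Ioi 0) :=
    fun x hx => ((Real.continuousAt_const_rpow (cdf_one_pos hβ hμ).ne').comp
      (continuousAt_inv₀ (ne_of_gt hx))).continuousWithinAt
  have hGq : EqOn G (fun x => cdf μ 1 ^ x⁻¹) (range ((↑) : ℚ → ℝ) ∩ Ioi 0) := by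
    rintro _ ⟨⟨q, rfl⟩, hq⟩
    simpa [G] using eq_rpow_inv_of_eq_pow_natCast_mul (fun x _ => cdf_nonneg μ _) hG
      (q := q) (by exact_mod_cast mem_Ioi.1 hq)
  have hr' := hG_mono.eqOn_of_dense_of_continuousOn hcont Rat.denseRange_cast hGq
    (Real.rpow_pos_of_pos hr β⁻¹)
  simp only [G, Real.rpow_inv_rpow hr.le hβ.ne'] at hr'
  rw [hr', ← Real.rpow_neg hr.le, neg_div, one_div]

end IsMaxStable

/-- Lemma 2.9 (stability under suprema): a probability law on `ℝ` that is
invariant under taking the maximum of `k` i.i.d. copies rescaled by `k^{-β}`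
has cumulative distribution function `exp (t · r^{-1/β})` on `(0,∞)` for some
`t ≤ 0`. -/
theorem max_stable_law_cdf
    (β : ℝ) (hβ : 0 < β)
    (μ : Measure ℝ) [IsProbabilityMeasure μ]
    (hstab : ∀ k : ℕ, 1 ≤ k → ∀ s : ℝ,
      μ (Set.Iic s) = (μ (Set.Iic ((k : ℝ) ^ β * s))) ^ k) :
    ∃ t : ℝ, t ≤ 0 ∧ ∀ r : ℝ, 0 < r →
      μ (Set.Iic r) = ENNReal.ofReal (Real.exp (t * r ^ (-1 / β))) := by
  have hμ : IsMaxStable β (cdf μ) := fun k hk s => by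
    rw [cdf_eq_real, cdf_eq_real, measureReal_def, measureReal_def, hstab k hk s,
      ENNReal.toReal_pow]
  refine ⟨Real.log (cdf μ 1), Real.log_nonpos (cdf_nonneg μ 1) (cdf_le_one μ 1), fun r hr => ?_⟩
  rw [← ofReal_cdf, hμ.cdf_eq_rpow hβ hr, Real.rpow_def_of_pos (hμ.cdf_one_pos hβ)]
end

section
/- Fix β > 0 and let F : ℝ → ℝ be a nondecreasing function with 0 ≤ F(s) ≤ 1 for all s, with F(s) → 1 as s → ∞, and satisfying F(k^β · s) = F(s)^{1/k} for every integer k ≥ 1 and every s > 0. Then F(1) > 0 and, with t = log F(1) (so t ≤ 0), F(r) = F(1)^{r^{−1/β}} = exp(t · r^{−1/β}) for all r > 0. -/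
/-!
Applying the equation with `k` and with `m` shows `F (q ^ β * s) = F s ^ (1 / q)` for every
positive rational `q = m / k`. Hence `x ↦ F (x ^ β)` agrees on the positive rationals with the
continuous function `x ↦ F 1 ^ (1 / x)`, and being monotone it agrees with it on all of
`(0, ∞)`; substituting `x = r ^ (1 / β)` gives the formula. `F 1 > 0` because otherwise
`F (k ^ β) = F 1 ^ (1 / k) = 0` for all `k`, although `F (k ^ β) → 1`.
-/

open Filter Topology Set

def ScalingEquation (β : ℝ) (F : ℝ → ℝ) : Prop :=
  ∀ k : ℕ, 1 ≤ k → ∀ s : ℝ, 0 < s → F ((k : ℝ) ^ β * s) = F s ^ ((1 : ℝ) / k)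

namespace ScalingEquation

variable {β : ℝ} {F : ℝ → ℝ}

theorem apply_pos (h : ScalingEquation β F) (hβ : 0 < β) (hF : ∀ s, 0 ≤ F s)
    (hlim : Tendsto F atTop (𝓝 1)) {s : ℝ} (hs : 0 < s) : 0 < F s := by
  refine (hF s).lt_of_ne' fun hzero => zero_ne_one (α := ℝ) ?_
  have hscale : Tendsto (fun k : ℕ => (k : ℝ) ^ β * s) atTop atTop :=
    ((tendsto_rpow_atTop hβ).comp tendsto_natCast_atTop_atTop).atTop_mul_const hs
  refine tendsto_nhds_unique ?_ (hlim.comp hscale)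
  refine tendsto_const_nhds.congr' ((eventually_ge_atTop 1).mono fun k hk => ?_)
  simp only [Function.comp_apply, h k hk s hs, hzero]
  exact (Real.zero_rpow (by positivity)).symm

theorem apply_div_rpow_mul (h : ScalingEquation β F) (hF : ∀ s, 0 ≤ F s) {m k : ℕ}
    (hm : 1 ≤ m) (hk : 1 ≤ k) {s : ℝ} (hs : 0 < s) :
    F (((m : ℝ) / k) ^ β * s) = F s ^ ((k : ℝ) / m) := by
  have hk₀ : (0 : ℝ) < k := by exact_mod_cast hk
  have hmk : (k : ℝ) ^ β * (((m : ℝ) / k) ^ β * s) = (m : ℝ) ^ β * s := by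
    rw [← mul_assoc, ← Real.mul_rpow hk₀.le (by positivity), mul_div_cancel₀ _ hk₀.ne']
  have hroot := h k hk (((m : ℝ) / k) ^ β * s) (by positivity)
  rw [hmk, h m hm s hs, one_div, one_div] at hroot
  rw [(Real.rpow_inv_eq (hF _) (Real.rpow_nonneg (hF s) _) hk₀.ne').1 hroot.symm,
    ← Real.rpow_mul (hF s), inv_mul_eq_div]

theorem apply_ratCast_rpow_mul (h : ScalingEquation β F) (hF : ∀ s, 0 ≤ F s) {q : ℚ}
    (hq : 0 < q) {s : ℝ} (hs : 0 < s) : F ((q : ℝ) ^ β * s) = F s ^ (q : ℝ)⁻¹ := by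
  have hnum : ((q.num.toNat : ℕ) : ℝ) = q.num := by
    exact_mod_cast Int.toNat_of_nonneg (Rat.num_pos.2 hq).le
  have hq' : (q : ℝ) = (q.num.toNat : ℕ) / (q.den : ℕ) := by rw [hnum, Rat.cast_def]
  rw [hq', inv_div]
  exact h.apply_div_rpow_mul hF (by have := Rat.num_pos.2 hq; omega) q.pos hs

end ScalingEquation

theorem MonotoneOn.eq_of_continuousAt_of_eq_on_rat {f g : ℝ → ℝ} {s : Set ℝ} {x : ℝ}
    (hs : IsOpen s) (hf : MonotoneOn f s) (hg : ContinuousAt g x) (hx : x ∈ s)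
    (hfg : ∀ q : ℚ, (q : ℝ) ∈ s → f q = g q) : f x = g x := by
  by_contra hne
  rcases lt_or_gt_of_ne hne with hlt | hlt
  · obtain ⟨l, u, ⟨hlx, hxu⟩, hsub⟩ := mem_nhds_iff_exists_Ioo_subset.1
      (inter_mem (hs.mem_nhds hx) (hg.eventually (lt_mem_nhds hlt)))
    obtain ⟨q, hlq, hqx⟩ := exists_rat_btwn hlx
    obtain ⟨hqs, hgq : f x < g q⟩ := hsub ⟨hlq, hqx.trans hxu⟩
    linarith [hf hqs hx hqx.le, hfg q hqs]
  · obtain ⟨l, u, ⟨hlx, hxu⟩, hsub⟩ := mem_nhds_iff_exists_Ioo_subset.1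
      (inter_mem (hs.mem_nhds hx) (hg.eventually (gt_mem_nhds hlt)))
    obtain ⟨q, hxq, hqu⟩ := exists_rat_btwn hxu
    obtain ⟨hqs, hgq : g q < f x⟩ := hsub ⟨hlx.trans hxq, hqu⟩
    linarith [hf hx hqs hxq.le, hfg q hqs]

/-- Analytic core of Lemma 2.9: a nondecreasing function `F : ℝ → [0,1]`
tending to `1` at `+∞` and satisfying `F (k^β s) = F s ^ (1/k)` for all
integers `k ≥ 1` and all `s > 0` satisfies `F 1 > 0` and
`F r = exp (log (F 1) · r^{-1/β})` for all `r > 0`. -/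
theorem cdf_functional_equation
    (β : ℝ) (hβ : 0 < β)
    (F : ℝ → ℝ)
    (hmono : Monotone F)
    (hbd : ∀ s : ℝ, 0 ≤ F s ∧ F s ≤ 1)
    (hlim : Filter.Tendsto F Filter.atTop (nhds 1))
    (heq : ∀ k : ℕ, 1 ≤ k → ∀ s : ℝ, 0 < s →
      F ((k : ℝ) ^ β * s) = (F s) ^ ((1 : ℝ) / k)) :
    0 < F 1 ∧ ∀ r : ℝ, 0 < r →
      F r = Real.exp (Real.log (F 1) * r ^ (-1 / β)) := by
  have hscale : ScalingEquation β F := heq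
  have hF s : 0 ≤ F s := (hbd s).1
  have hF1 : 0 < F 1 := hscale.apply_pos hβ hF hlim one_pos
  refine ⟨hF1, fun r hr => ?_⟩
  have hx : 0 < r ^ β⁻¹ := Real.rpow_pos_of_pos hr _
  have hmonoOn : MonotoneOn (fun x => F (x ^ β)) (Ioi 0) := fun a ha b _ hab =>
    hmono (Real.rpow_le_rpow (le_of_lt ha) hab hβ.le)
  have hcont : ContinuousAt (fun x => Real.exp (Real.log (F 1) * x⁻¹)) (r ^ β⁻¹) := by
    fun_prop (disch := exact hx.ne')
  have hrat (q : ℚ) (hq : (q : ℝ) ∈ Ioi 0) :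
      F ((q : ℝ) ^ β) = Real.exp (Real.log (F 1) * (q : ℝ)⁻¹) := by
    simpa [Real.rpow_def_of_pos hF1] using
      hscale.apply_ratCast_rpow_mul hF (Rat.cast_pos.1 (mem_Ioi.1 hq)) one_pos
  have hagree := hmonoOn.eq_of_continuousAt_of_eq_on_rat isOpen_Ioi hcont hx hrat
  rw [neg_div, one_div, Real.rpow_neg hr.le]
  rwa [Real.rpow_inv_rpow hr.le hβ.ne'] at hagree
end

section
/- Fix β > 0. Let (Ω, P) be a probability space carrying real-valued random variables D(a,b), indexed by rational pairs a,b ∈ [0,1], such that: (1) for all a,b, D(a,b) = D(b,a) almost surely; (2) for any finite collection of pairwise disjoint open intervals (a₁,b₁),…,(aₙ,bₙ) with rational endpoints in [0,1], the random variables D(a₁,b₁),…,D(aₙ,bₙ) are mutually independent; (3) D(a,a) = 0 almost surely for all a; (4) for all rational a < b < c in [0,1], D(a,c) = max(D(a,b), D(b,c)) almost surely; (5) for all rational a < b in [0,1], D(a,b) has the same law as (b−a)^β · D(0,1). Then there exists t ≤ 0 such that for every finite collection of pairwise disjoint open intervals (a₁,b₁),…,(aₙ,bₙ) with rational endpoints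 in [0,1] and all reals r₁,…,rₙ > 0, P[D(aᵢ,bᵢ) ≤ rᵢ for all i = 1,…,n] = ∏_{i=1}^n exp(t·(bᵢ−aᵢ)·rᵢ^{−1/β}). -/
/-!
Let `F` be the distribution function of `D(0,1)`. By scaling, `P[D(a,b) ≤ r] = F(r / (b-a)^β)`,
and since `D(a,c)` is the maximum of the independent `D(a,b)` and `D(b,c)`, the map
`ℓ ↦ F(r / ℓ^β)` is multiplicative over sums of rational lengths; hence `F(r / ℓ^β) = F(r)^ℓ` for
rational `ℓ ∈ (0,1]`. Consequently `u ↦ F(u^{-β})` equals `exp (t u)` with `t = log F(1)` at every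
positive rational `u` (with `F(1) > 0` because `F → 1`), and being monotone it equals `exp (t u)`
everywhere. Independence over disjoint intervals then turns the joint law into the product.
-/

open MeasureTheory ProbabilityTheory Set Filter Topology

section Distribution

variable {Ω : Type*} [MeasurableSpace Ω] {P : Measure Ω} [IsProbabilityMeasure P] {X Y Z : Ω → ℝ}

lemma cdf_map_eq_measureReal (hX : Measurable X) (x : ℝ) :
    cdf (P.map X) x = P.real {ω | X ω ≤ x} := by
  have := Measure.isProbabilityMeasure_map (μ := P) hX.aemeasurable
  rw [cdf_eq_real, map_measureReal_apply hX measurableSet_Iic]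
  rfl

lemma ofReal_cdf_map (hX : Measurable X) (x : ℝ) :
    ENNReal.ofReal (cdf (P.map X) x) = P {ω | X ω ≤ x} := by
  rw [cdf_map_eq_measureReal hX, ofReal_measureReal]

lemma cdf_map_const_mul (hX : Measurable X) {c : ℝ} (hc : 0 < c) (x : ℝ) :
    cdf (P.map fun ω => c * X ω) x = cdf (P.map X) (x / c) := by
  simp only [cdf_map_eq_measureReal (hX.const_mul c), cdf_map_eq_measureReal hX, le_div_iff₀' hc]

lemma cdf_map_of_ae_eq_max (hX : Measurable X) (hY : Measurable Y) (hZ : Measurable Z)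
    (hXY : IndepFun X Y P) (hmax : ∀ᵐ ω ∂P, Z ω = max (X ω) (Y ω)) (x : ℝ) :
    cdf (P.map Z) x = cdf (P.map X) x * cdf (P.map Y) x := by
  have hsets : ({ω | Z ω ≤ x} : Set Ω) =ᵐ[P] (X ⁻¹' Iic x ∩ Y ⁻¹' Iic x : Set Ω) := by
    filter_upwards [hmax] with ω hω
    change (Z ω ≤ x) = (X ω ≤ x ∧ Y ω ≤ x)
    rw [hω, max_le_iff]
  rw [cdf_map_eq_measureReal hZ, measureReal_congr hsets, measureReal_def,
    hXY.measure_inter_preimage_eq_mul _ _ measurableSet_Iic measurableSet_Iic, ENNReal.toReal_mul,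
    cdf_map_eq_measureReal hX, cdf_map_eq_measureReal hY]
  rfl

end Distribution

lemma ProbabilityTheory.iIndepFun.measure_forall_le {Ω ι : Type*} [MeasurableSpace Ω]
    {P : Measure Ω} [Fintype ι] {X : ι → Ω → ℝ} (hX : iIndepFun X P) (r : ι → ℝ) :
    P {ω | ∀ i, X i ω ≤ r i} = ∏ i, P {ω | X i ω ≤ r i} := by
  rw [ofPred_forall]
  exact hX.meas_iInter fun i => ⟨Iic (r i), measurableSet_Iic, rfl⟩

lemma pairwise_disjoint_Ioo_fin_two {α : Type*} [Preorder α] (a b c : α) :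
    Pairwise fun i j : Fin 2 =>
      Disjoint (Ioo (![a, b] i) (![b, c] i)) (Ioo (![a, b] j) (![b, c] j)) := by
  have hd : Disjoint (Ioo a b) (Ioo b c) :=
    Ico_disjoint_Ico_same.mono Ioo_subset_Ico_self Ioo_subset_Ico_self
  intro i j hij
  fin_cases i <;> fin_cases j <;> simp_all [hd.symm]

section Cauchy

variable {ψ : ℚ → ℝ}
  (hadd : ∀ x y : ℚ, 0 < x → 0 < y → x + y ≤ 1 → ψ (x + y) = ψ x * ψ y)
include hadd

lemma map_natCast_mul_eq_pow {h : ℚ} (hh : 0 < h) {n : ℕ} (hn : 0 < n) (hnh : n * h ≤ 1) :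
    ψ (n * h) = ψ h ^ n := by
  induction n, hn using Nat.le_induction with
  | base => simp
  | succ n hn ih =>
    have hpos : 0 < (n : ℚ) * h := by positivity
    push_cast at hnh ⊢
    rw [add_mul, one_mul, hadd _ _ hpos hh (by linarith), ih (by linarith), pow_succ]

lemma eq_rpow_of_map_add_eq_mul (hψ : ∀ x, 0 ≤ ψ x) {x : ℚ} (hx0 : 0 < x) (hx1 : x ≤ 1) :
    ψ x = ψ 1 ^ (x : ℝ) := by
  obtain ⟨p, hp⟩ := Int.eq_ofNat_of_zero_le (Rat.num_nonneg.mpr hx0.le)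
  have hx : x = p * (1 / x.den) := by
    rw [mul_one_div, ← Int.cast_natCast, ← hp, Rat.num_div_den]
  have hxR : (x : ℝ) = p * (1 / x.den) := by
    nth_rewrite 1 [hx]
    push_cast
    rfl
  have hp0 : 0 < p := by
    have := Rat.num_pos.mpr hx0
    omega
  have h1 : ψ 1 = ψ (1 / x.den) ^ x.den := by
    rw [← map_natCast_mul_eq_pow hadd (by positivity) x.den_pos (by field_simp; rfl)]
    field_simp
  rw [h1, ← Real.rpow_natCast, ← Real.rpow_mul (hψ _)]
  conv_lhs => rw [hx, map_natCast_mul_eq_pow hadd (by positivity) hp0 (hx ▸ hx1)]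
  rw [← Real.rpow_natCast]
  congr 1
  rw [hxR]
  field_simp

end Cauchy

lemma mem_closure_Ioo_inter_range_ratCast {a b x : ℝ} (hab : a < b) (hx : x ∈ Icc a b) :
    x ∈ closure (Ioo a b ∩ range ((↑) : ℚ → ℝ)) := by
  rw [← closure_Ioo hab.ne] at hx
  simpa using closure_mono (Rat.denseRange_cast.open_subset_closure_inter isOpen_Ioo) hx

lemma AntitoneOn.eq_of_eq_ratCast {f g : ℝ → ℝ} (hf : AntitoneOn f (Ioi 0)) (hg : Continuous g)
    (hfg : ∀ q : ℚ, 0 < q → f q = g q) {x : ℝ} (hx : 0 < x) : f x = g x := by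
  apply le_antisymm
  · refine closure_minimal (s := Ioo 0 x ∩ range ((↑) : ℚ → ℝ)) ?_
      (isClosed_le continuous_const hg) (mem_closure_Ioo_inter_range_ratCast hx ⟨hx.le, le_rfl⟩)
    rintro _ ⟨⟨hq0, hqx⟩, q, rfl⟩
    exact (hf hq0 hx hqx.le).trans_eq (hfg q (by exact_mod_cast hq0))
  · refine closure_minimal (s := Ioo x (x + 1) ∩ range ((↑) : ℚ → ℝ)) ?_
      (isClosed_le hg continuous_const)
      (mem_closure_Ioo_inter_range_ratCast (lt_add_one x) ⟨le_rfl, by linarith⟩)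
    rintro _ ⟨⟨hxq, -⟩, q, rfl⟩
    have hq0 : (0 : ℝ) < q := hx.trans hxq
    exact (hfg q (by exact_mod_cast hq0)).symm.trans_le (hf hx hq0 hxq.le)

section FrechetLaw

variable {F : ℝ → ℝ} {β : ℝ} (hF : ∀ r, 0 ≤ F r)
  (hsplit : ∀ (r : ℝ) (ℓ₁ ℓ₂ : ℚ), 0 < ℓ₁ → 0 < ℓ₂ → ℓ₁ + ℓ₂ ≤ 1 →
    F (r / ((ℓ₁ + ℓ₂ : ℚ) : ℝ) ^ β) = F (r / (ℓ₁ : ℝ) ^ β) * F (r / (ℓ₂ : ℝ) ^ β))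
include hF hsplit

lemma apply_div_rpow_eq_rpow (r : ℝ) {ℓ : ℚ} (h0 : 0 < ℓ) (h1 : ℓ ≤ 1) :
    F (r / (ℓ : ℝ) ^ β) = F r ^ (ℓ : ℝ) := by
  simpa using eq_rpow_of_map_add_eq_mul (ψ := fun ℓ : ℚ => F (r / (ℓ : ℝ) ^ β)) (hsplit r)
    (fun _ => hF _) h0 h1

lemma apply_inv_rpow_eq_rpow {u : ℚ} (hu : 0 < u) : F ((u : ℝ) ^ β)⁻¹ = F 1 ^ (u : ℝ) := by
  have huR : (0 : ℝ) < u := by exact_mod_cast hu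
  rcases le_or_gt u 1 with hu1 | hu1
  · simpa [one_div] using apply_div_rpow_eq_rpow hF hsplit 1 hu hu1
  · have h := apply_div_rpow_eq_rpow hF hsplit ((u : ℝ) ^ β)⁻¹ (inv_pos.2 hu)
      (inv_le_one_of_one_le₀ hu1.le)
    have hone : ((u : ℝ) ^ β)⁻¹ / ((u⁻¹ : ℚ) : ℝ) ^ β = 1 := by
      rw [Rat.cast_inv, Real.inv_rpow huR.le,
        div_self (inv_ne_zero (Real.rpow_pos_of_pos huR β).ne')]
    rw [hone, Rat.cast_inv] at h
    rw [h, Real.rpow_inv_rpow (hF _) huR.ne']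

lemma apply_one_pos (hlim : Tendsto F atTop (𝓝 1)) (hβ : 0 < β) : 0 < F 1 := by
  -- otherwise `F` vanishes along `n ^ β → ∞`
  by_contra hpos
  have hzero : F 1 = 0 := le_antisymm (not_lt.1 hpos) (hF 1)
  have hseq : Tendsto (fun n : ℕ => F ((n : ℝ) ^ β)) atTop (𝓝 1) :=
    hlim.comp ((tendsto_rpow_atTop hβ).comp tendsto_natCast_atTop_atTop)
  have hseq0 : Tendsto (fun n : ℕ => F ((n : ℝ) ^ β)) atTop (𝓝 0) := by
    refine tendsto_const_nhds.congr' ?_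
    filter_upwards [eventually_gt_atTop 0] with n hn
    have hnQ : (0 : ℚ) < (n : ℚ)⁻¹ := by positivity
    have := apply_inv_rpow_eq_rpow hF hsplit hnQ
    rw [hzero, Real.zero_rpow (by exact_mod_cast hnQ.ne'), Rat.cast_inv, Rat.cast_natCast,
      Real.inv_rpow (Nat.cast_nonneg n), inv_inv] at this
    exact this.symm
  exact zero_ne_one (tendsto_nhds_unique hseq0 hseq)

lemma exists_eq_exp_mul_rpow (hmono : Monotone F) (hlim : Tendsto F atTop (𝓝 1)) (hβ : 0 < β) :
    ∃ t ≤ 0, ∀ s, 0 < s → F s = Real.exp (t * s ^ (-1 / β)) := by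
  refine ⟨Real.log (F 1), Real.log_nonpos (hF 1) (hmono.ge_of_tendsto hlim 1), fun s hs => ?_⟩
  have hanti : AntitoneOn (fun x : ℝ => F (x ^ β)⁻¹) (Ioi 0) := fun x hx y _ hxy =>
    hmono (inv_anti₀ (Real.rpow_pos_of_pos hx β) (Real.rpow_le_rpow hx.le hxy hβ.le))
  have hrat : ∀ q : ℚ, 0 < q → F ((q : ℝ) ^ β)⁻¹ = Real.exp (Real.log (F 1) * q) := fun q hq => by
    rw [apply_inv_rpow_eq_rpow hF hsplit hq, Real.rpow_def_of_pos (apply_one_pos hF hsplit hlim hβ)]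
  have hs' : ((s ^ (-1 / β)) ^ β)⁻¹ = s := by
    rw [← Real.rpow_mul hs.le, div_mul_cancel₀ _ hβ.ne', Real.rpow_neg_one, inv_inv]
  simpa only [hs'] using hanti.eq_of_eq_ratCast (g := fun x => Real.exp (Real.log (F 1) * x))
    (by fun_prop) hrat (Real.rpow_pos_of_pos hs (-1 / β))

end FrechetLaw

lemma div_rpow_rpow_neg_one_div {r ℓ β : ℝ} (hr : 0 ≤ r) (hℓ : 0 ≤ ℓ) (hβ : β ≠ 0) :
    (r / ℓ ^ β) ^ (-1 / β) = ℓ * r ^ (-1 / β) := by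
  rw [Real.div_rpow hr (Real.rpow_nonneg hℓ β), ← Real.rpow_mul hℓ, mul_div_cancel₀ _ hβ,
    Real.rpow_neg_one, div_inv_eq_mul, mul_comm]

theorem slice_independence_characterization_general
    (β : ℝ) (hβ : 0 < β)
    {Ω : Type*} [MeasurableSpace Ω] (P : Measure Ω) [IsProbabilityMeasure P]
    (D : ℚ → ℚ → Ω → ℝ)
    (hmeas : ∀ a b : ℚ, Measurable (D a b))
    (hindep : ∀ (n : ℕ) (a b : Fin n → ℚ),
      (∀ i, a i ∈ Set.Icc (0 : ℚ) 1 ∧ b i ∈ Set.Icc (0 : ℚ) 1 ∧ a i < b i) →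
      (Pairwise fun i j => Disjoint (Set.Ioo (a i) (b i)) (Set.Ioo (a j) (b j))) →
      iIndepFun
        (fun i => D (a i) (b i)) P)
    (hmax : ∀ a b c : ℚ, a ∈ Set.Icc (0 : ℚ) 1 → b ∈ Set.Icc (0 : ℚ) 1 →
      c ∈ Set.Icc (0 : ℚ) 1 → a < b → b < c →
      ∀ᵐ ω ∂P, D a c ω = max (D a b ω) (D b c ω))
    (hscale : ∀ a b : ℚ, a ∈ Set.Icc (0 : ℚ) 1 → b ∈ Set.Icc (0 : ℚ) 1 → a < b →
      Measure.map (D a b) P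
        = Measure.map (fun ω => ((b : ℝ) - (a : ℝ)) ^ β * D 0 1 ω) P) :
    ∃ t : ℝ, t ≤ 0 ∧
      ∀ (n : ℕ) (a b : Fin n → ℚ),
        (∀ i, a i ∈ Set.Icc (0 : ℚ) 1 ∧ b i ∈ Set.Icc (0 : ℚ) 1 ∧ a i < b i) →
        (Pairwise fun i j => Disjoint (Set.Ioo (a i) (b i)) (Set.Ioo (a j) (b j))) →
        ∀ r : Fin n → ℝ, (∀ i, 0 < r i) →
          P {ω | ∀ i, D (a i) (b i) ω ≤ r i}
            = ENNReal.ofReal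
                (∏ i, Real.exp (t * ((b i : ℝ) - (a i : ℝ)) * (r i) ^ (-1 / β))) := by
  set F := cdf (P.map (D 0 1))
  have hlaw : ∀ a b : ℚ, a ∈ Icc 0 1 → b ∈ Icc 0 1 → a < b → ∀ r : ℝ,
      cdf (P.map (D a b)) r = F (r / ((b - a : ℚ) : ℝ) ^ β) := fun a b ha hb hab r => by
    have hlen : (0 : ℝ) < ((b - a : ℚ) : ℝ) := by exact_mod_cast sub_pos.2 hab
    rw [hscale a b ha hb hab, ← Rat.cast_sub,
      cdf_map_const_mul (hmeas 0 1) (Real.rpow_pos_of_pos hlen β)]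
  have hsplit : ∀ (r : ℝ) (ℓ₁ ℓ₂ : ℚ), 0 < ℓ₁ → 0 < ℓ₂ → ℓ₁ + ℓ₂ ≤ 1 →
      F (r / ((ℓ₁ + ℓ₂ : ℚ) : ℝ) ^ β) = F (r / (ℓ₁ : ℝ) ^ β) * F (r / (ℓ₂ : ℝ) ^ β) := by
    intro r ℓ₁ ℓ₂ h₁ h₂ h
    have h0 : (0 : ℚ) ∈ Icc 0 1 := ⟨le_rfl, zero_le_one⟩
    have hb : ℓ₁ ∈ Icc 0 1 := ⟨h₁.le, by linarith⟩
    have hc : ℓ₁ + ℓ₂ ∈ Icc 0 1 := ⟨by positivity, h⟩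
    have hbc : ℓ₁ < ℓ₁ + ℓ₂ := lt_add_of_pos_right ℓ₁ h₂
    have hind : IndepFun (D 0 ℓ₁) (D ℓ₁ (ℓ₁ + ℓ₂)) P :=
      (hindep 2 ![0, ℓ₁] ![ℓ₁, ℓ₁ + ℓ₂] (Fin.forall_fin_two.2 ⟨⟨h0, hb, h₁⟩, ⟨hb, hc, hbc⟩⟩)
        (pairwise_disjoint_Ioo_fin_two _ _ _)).indepFun zero_ne_one
    have := cdf_map_of_ae_eq_max (hmeas _ _) (hmeas _ _) (hmeas _ _) hind
      (hmax 0 ℓ₁ (ℓ₁ + ℓ₂) h0 hb hc h₁ hbc) r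
    rwa [hlaw _ _ h0 hc (by positivity), hlaw _ _ h0 hb h₁, hlaw _ _ hb hc hbc, sub_zero, sub_zero,
      add_sub_cancel_left] at this
  obtain ⟨t, ht, hF⟩ :=
    exists_eq_exp_mul_rpow (cdf_nonneg _) hsplit (monotone_cdf _) (tendsto_cdf_atTop _) hβ
  refine ⟨t, ht, fun n a b hab hdisj r hr => ?_⟩
  rw [(hindep n a b hab hdisj).measure_forall_le,
    ENNReal.ofReal_prod_of_nonneg fun i _ => (Real.exp_pos _).le]
  refine Finset.prod_congr rfl fun i _ => ?_
  obtain ⟨ha, hb, hlt⟩ := hab i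
  have hlen : (0 : ℝ) < ((b i - a i : ℚ) : ℝ) := by exact_mod_cast sub_pos.2 hlt
  rw [← ofReal_cdf_map (hmeas _ _), hlaw _ _ ha hb hlt,
    hF _ (div_pos (hr i) (Real.rpow_pos_of_pos hlen β)),
    div_rpow_rpow_neg_one_div (hr i).le hlen.le hβ.ne', Rat.cast_sub, mul_assoc]

/-- Proposition 2.8: a family of random variables `D(a,b)`, indexed by rational
pairs in `[0,1]`, that is symmetric, independent over disjoint intervals,
vanishing on the diagonal, maximal over concatenations, and scaling with
exponent `β`, has the joint law of the sub-interval maxima of a Poisson point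
process on `[0,1] × ℝ₊` with intensity `ds ⊗ x^{-1/β-1} dx`; equivalently its
finite-dimensional distribution functions over disjoint intervals are products
of `exp (t (b-a) r^{-1/β})` for some `t ≤ 0`. -/
theorem slice_independence_characterization
    (β : ℝ) (hβ : 0 < β)
    {Ω : Type*} [MeasurableSpace Ω] (P : Measure Ω) [IsProbabilityMeasure P]
    (D : ℚ → ℚ → Ω → ℝ)
    (hmeas : ∀ a b : ℚ, Measurable (D a b))
    (hsym : ∀ a b : ℚ, a ∈ Set.Icc (0 : ℚ) 1 → b ∈ Set.Icc (0 : ℚ) 1 →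
      ∀ᵐ ω ∂P, D a b ω = D b a ω)
    (hindep : ∀ (n : ℕ) (a b : Fin n → ℚ),
      (∀ i, a i ∈ Set.Icc (0 : ℚ) 1 ∧ b i ∈ Set.Icc (0 : ℚ) 1 ∧ a i < b i) →
      (Pairwise fun i j => Disjoint (Set.Ioo (a i) (b i)) (Set.Ioo (a j) (b j))) →
      iIndepFun
        (fun i => D (a i) (b i)) P)
    (hdiag : ∀ a : ℚ, a ∈ Set.Icc (0 : ℚ) 1 → ∀ᵐ ω ∂P, D a a ω = 0)
    (hmax : ∀ a b c : ℚ, a ∈ Set.Icc (0 : ℚ) 1 → b ∈ Set.Icc (0 : ℚ) 1 →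
      c ∈ Set.Icc (0 : ℚ) 1 → a < b → b < c →
      ∀ᵐ ω ∂P, D a c ω = max (D a b ω) (D b c ω))
    (hscale : ∀ a b : ℚ, a ∈ Set.Icc (0 : ℚ) 1 → b ∈ Set.Icc (0 : ℚ) 1 → a < b →
      Measure.map (D a b) P
        = Measure.map (fun ω => ((b : ℝ) - (a : ℝ)) ^ β * D 0 1 ω) P) :
    ∃ t : ℝ, t ≤ 0 ∧
      ∀ (n : ℕ) (a b : Fin n → ℚ),
        (∀ i, a i ∈ Set.Icc (0 : ℚ) 1 ∧ b i ∈ Set.Icc (0 : ℚ) 1 ∧ a i < b i) →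
        (Pairwise fun i j => Disjoint (Set.Ioo (a i) (b i)) (Set.Ioo (a j) (b j))) →
        ∀ r : Fin n → ℝ, (∀ i, 0 < r i) →
          P {ω | ∀ i, D (a i) (b i) ω ≤ r i}
            = ENNReal.ofReal
                (∏ i, Real.exp (t * ((b i : ℝ) - (a i : ℝ)) * (r i) ^ (-1 / β))) :=
  slice_independence_characterization_general β hβ P D hmeas hindep hmax hscale
end

section
/- Let (A_s)_{s ≥ 0} be a real-valued stochastic process on a probability space such that: A_0 = 0 almost surely; almost surely s ↦ A_s is nondecreasing; A has stationary independent increments, i.e., for every finite sequence 0 ≤ t₀ ≤ t₁ ≤ ⋯ ≤ t_n the increments A_{t₁} − A_{t₀}, …, A_{t_n} − A_{t_{n−1}} are mutually independent and, for all 0 ≤ s ≤ t, A_t − A_s has the same law as A_{t−s}; and P[A₁ > 0] = 1. Then for all a, b > 0, E[A_a / A_{a+b}] = a/(a+b). -/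
/-!
Fix `T > 0` and put `f s = E[A_s / A_T]` for `s ∈ [0, T]`. The increments of `A` over
`[0, s]`, `[s, s + u]`, `[s + u, T]` are independent with laws depending only on the lengths, so
exchanging the first two leaves their joint law unchanged; this gives
`E[(A_{s+u} - A_s) / A_T] = E[A_u / A_T]`, i.e. `f` is additive. A nondecreasing additive function
on `[0, T]` is linear, and `f T = 1` because `A_T > 0` almost surely: the `n` increments of
length `T` in `[0, nT]` all vanish with probability `P(A_T = 0) ^ n`, and they cannot all vanish
once `nT ≥ 1`, since `0 < A_1 ≤ A_{nT}`.
-/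

open MeasureTheory ProbabilityTheory Set Filter Topology

section Cauchy

variable {f : ℝ → ℝ} {T : ℝ}

theorem map_nat_mul_of_map_add
    (hadd : ∀ s u, 0 ≤ s → 0 ≤ u → s + u ≤ T → f (s + u) = f s + f u)
    {x : ℝ} (hx : 0 ≤ x) (k : ℕ) (hk : k * x ≤ T) : f (k * x) = k * f x := by
  induction k with
  | zero =>
    simpa using hadd 0 0 le_rfl le_rfl (by simpa using hk)
  | succ k ih =>
    push_cast at hk ⊢
    rw [add_one_mul, hadd _ _ (by positivity) hx (by linarith), ih (by linarith)]
    ring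

theorem map_nat_mul_div_of_map_add
    (hadd : ∀ s u, 0 ≤ s → 0 ≤ u → s + u ≤ T → f (s + u) = f s + f u) (hT : 0 ≤ T)
    {n k : ℕ} (hn : 0 < n) (hk : k ≤ n) : f (k * (T / n)) = k / n * f T := by
  have hn' : (0 : ℝ) < n := by exact_mod_cast hn
  have hstep : 0 ≤ T / n := by positivity
  have hnT : (n : ℝ) * (T / n) = T := by field_simp
  have hunit : f (T / n) = f T / n := by
    have := map_nat_mul_of_map_add hadd hstep n hnT.le
    rw [hnT] at this
    field_simp
    linarith
  rw [map_nat_mul_of_map_add hadd hstep k, hunit]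
  · ring
  · calc (k : ℝ) * (T / n) ≤ n * (T / n) := by gcongr
      _ = T := hnT

theorem abs_sub_div_mul_le_of_monotoneOn_of_map_add (hT : 0 < T) (hf : MonotoneOn f (Icc 0 T))
    (hadd : ∀ s u, 0 ≤ s → 0 ≤ u → s + u ≤ T → f (s + u) = f s + f u)
    {a : ℝ} (ha : 0 ≤ a) (haT : a < T) {n : ℕ} (hn : 0 < n) :
    |f a - a / T * f T| ≤ f T / n := by
  have hn' : (0 : ℝ) < n := by exact_mod_cast hn
  set h := T / n with hh
  have hpos : 0 < h := by positivity
  set k := ⌊a / h⌋₊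
  have hk : (k : ℝ) ≤ a / h := Nat.floor_le (div_nonneg ha hpos.le)
  have hk' : a / h < k + 1 := Nat.lt_floor_add_one _
  have hkn : k + 1 ≤ n := by
    have : a / h < n := by rw [div_lt_iff₀ hpos, hh]; field_simp; exact haT
    exact_mod_cast (Nat.floor_lt (div_nonneg ha hpos.le)).2 this
  have hlow : (k : ℝ) / n * f T ≤ f a := by
    rw [← map_nat_mul_div_of_map_add hadd hT.le hn (by omega : k ≤ n)]
    refine hf ⟨by positivity, ?_⟩ ⟨ha, haT.le⟩ ((le_div_iff₀ hpos).1 hk)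
    linarith [(le_div_iff₀ hpos).1 hk]
  have hhigh : f a ≤ ((k : ℝ) + 1) / n * f T := by
    have := map_nat_mul_div_of_map_add hadd hT.le hn hkn
    push_cast at this
    rw [← this]
    refine hf ⟨ha, haT.le⟩ ⟨by positivity, ?_⟩ ((div_lt_iff₀ hpos).1 hk').le
    calc ((k : ℝ) + 1) * h ≤ n * h := by gcongr; exact_mod_cast hkn
      _ = T := by rw [hh]; field_simp
  have hf0 : f 0 = 0 := by simpa using map_nat_mul_of_map_add hadd le_rfl 0 (by simpa using hT.le)
  have hfT : 0 ≤ f T := hf0 ▸ hf ⟨le_rfl, hT.le⟩ ⟨hT.le, le_rfl⟩ hT.le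
  rw [abs_le, show a / T = a / h / n by rw [hh]; field_simp]
  have h1 : (k : ℝ) / n * f T ≤ a / h / n * f T := by gcongr
  have h2 : a / h / n * f T ≤ (k + 1) / n * f T := by gcongr
  have h3 : ((k : ℝ) + 1) / n * f T = k / n * f T + f T / n := by ring
  constructor <;> linarith

theorem eq_div_mul_of_monotoneOn_of_map_add (hT : 0 < T) (hf : MonotoneOn f (Icc 0 T))
    (hadd : ∀ s u, 0 ≤ s → 0 ≤ u → s + u ≤ T → f (s + u) = f s + f u)
    {a : ℝ} (ha : a ∈ Icc 0 T) : f a = a / T * f T := by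
  rcases ha.2.eq_or_lt with rfl | haT
  · field_simp
  have hlim : Tendsto (fun n : ℕ => f T / n) atTop (𝓝 0) := tendsto_const_div_atTop_nhds_zero_nat _
  have : |f a - a / T * f T| ≤ 0 := ge_of_tendsto hlim (eventually_atTop.2 ⟨1, fun n hn =>
    abs_sub_div_mul_le_of_monotoneOn_of_map_add hT hf hadd ha.1 haT hn⟩)
  linarith [abs_nonpos_iff.1 this]

end Cauchy

theorem ProbabilityTheory.iIndepFun.measure_iInter_preimage_eq_pow {Ω ι β : Type*}
    [MeasurableSpace Ω] [MeasurableSpace β] {P : Measure Ω} [Fintype ι] {X : ι → Ω → β}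
    {Y : Ω → β} (hX : iIndepFun X P) (hXY : ∀ i, IdentDistrib (X i) Y P P) {S : Set β}
    (hS : MeasurableSet S) : P (⋂ i, X i ⁻¹' S) = P (Y ⁻¹' S) ^ Fintype.card ι := by
  rw [hX.meas_iInter fun i => ⟨S, hS, rfl⟩, ← Finset.card_univ, ← Finset.prod_const]
  exact Finset.prod_congr rfl fun i _ => (hXY i).measure_mem_eq hS

section Subordinator

variable {Ω : Type*} [MeasurableSpace Ω] {P : Measure Ω} {A : ℝ → Ω → ℝ}

def increments (A : ℝ → Ω → ℝ) {n : ℕ} (t : Fin (n + 1) → ℝ) (i : Fin n) (ω : Ω) : ℝ :=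
  A (t i.succ) ω - A (t i.castSucc) ω

/-- Mathlib's `HasIndepIncrements` for the restriction of `A` to `[0, ∞)`. -/
def HasIndepIncrementsOnNonneg (A : ℝ → Ω → ℝ) (P : Measure Ω) : Prop :=
  ∀ (n : ℕ) (t : Fin (n + 1) → ℝ), 0 ≤ t 0 → Monotone t → iIndepFun (increments A t) P

def HasStationaryIncrements (A : ℝ → Ω → ℝ) (P : Measure Ω) : Prop :=
  ∀ s t : ℝ, 0 ≤ s → s ≤ t → P.map (fun ω => A t ω - A s ω) = P.map (A (t - s))

theorem identDistrib_increments {n : ℕ} {t : Fin (n + 1) → ℝ} (hmeas : ∀ t, Measurable (A t))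
    (hstat : HasStationaryIncrements A P) (ht₀ : 0 ≤ t 0) (ht : Monotone t) (i : Fin n) :
    IdentDistrib (increments A t i) (A (t i.succ - t i.castSucc)) P P :=
  ⟨((hmeas _).sub (hmeas _)).aemeasurable, (hmeas _).aemeasurable,
    hstat _ _ (ht₀.trans (ht (Fin.zero_le _))) (ht (Fin.castSucc_le_succ i))⟩

theorem identDistrib_increments_perm (hmeas : ∀ t, Measurable (A t))
    (hindep : HasIndepIncrementsOnNonneg A P) (hstat : HasStationaryIncrements A P)
    {n : ℕ} {t t' : Fin (n + 1) → ℝ} (ht₀ : 0 ≤ t 0) (ht : Monotone t) (ht'₀ : 0 ≤ t' 0)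
    (ht' : Monotone t') (σ : Equiv.Perm (Fin n))
    (hσ : ∀ i, t i.succ - t i.castSucc = t' (σ i).succ - t' (σ i).castSucc) :
    IdentDistrib (fun ω i => increments A t i ω) (fun ω i => increments A t' (σ i) ω) P P :=
  IdentDistrib.pi
    (fun i => (identDistrib_increments hmeas hstat ht₀ ht i).trans
      (hσ i ▸ identDistrib_increments hmeas hstat ht'₀ ht' (σ i)).symm)
    (hindep n t ht₀ ht) ((hindep n t' ht'₀ ht').precomp σ.injective)

theorem integral_increment_div_eq (hmeas : ∀ t, Measurable (A t)) (h0 : ∀ᵐ ω ∂P, A 0 ω = 0)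
    (hindep : HasIndepIncrementsOnNonneg A P) (hstat : HasStationaryIncrements A P)
    {s u T : ℝ} (hs : 0 ≤ s) (hu : 0 ≤ u) (hsuT : s + u ≤ T) :
    ∫ ω, (A (s + u) ω - A s ω) / A T ω ∂P = ∫ ω, A u ω / A T ω ∂P := by
  let Φ : (Fin 3 → ℝ) → ℝ := fun x => x 1 / (x 0 + x 1 + x 2)
  have hΦ : Measurable Φ := by fun_prop
  -- the increments over `0 ≤ s ≤ s + u ≤ T` and, with the first two swapped,
  -- over `0 ≤ u ≤ u + s ≤ T` have the same joint law
  have hexchange := (identDistrib_increments_perm hmeas hindep hstat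
    (t := ![0, s, s + u, T]) (t' := ![0, u, u + s, T]) le_rfl
    (by simpa using ⟨hs, hu, hsuT⟩) le_rfl
    (by simpa using ⟨hu, hs, by linarith⟩) (Equiv.swap 0 1)
    (by intro i; fin_cases i <;> simp [Equiv.swap_apply_of_ne_of_ne, add_comm])).comp hΦ
  calc ∫ ω, (A (s + u) ω - A s ω) / A T ω ∂P
      = ∫ ω, Φ (fun i => increments A ![0, s, s + u, T] i ω) ∂P := by
        refine integral_congr_ae ?_
        filter_upwards [h0] with ω hω
        simp [Φ, increments, hω]
    _ = ∫ ω, Φ (fun i => increments A ![0, u, u + s, T] (Equiv.swap 0 1 i) ω) ∂P :=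
        hexchange.integral_eq
    _ = ∫ ω, A u ω / A T ω ∂P := by
        refine integral_congr_ae ?_
        filter_upwards [h0] with ω hω
        simp [Φ, increments, hω, Equiv.swap_apply_of_ne_of_ne]

theorem ae_pos_of_ae_pos_one (hmeas : ∀ t, Measurable (A t)) (h0 : ∀ᵐ ω ∂P, A 0 ω = 0)
    (hmono : ∀ᵐ ω ∂P, ∀ s t : ℝ, 0 ≤ s → s ≤ t → A s ω ≤ A t ω)
    (hindep : HasIndepIncrementsOnNonneg A P) (hstat : HasStationaryIncrements A P)
    (hpos : ∀ᵐ ω ∂P, 0 < A 1 ω) {T : ℝ} (hT : 0 < T) : ∀ᵐ ω ∂P, 0 < A T ω := by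
  obtain ⟨n, hn⟩ := exists_nat_ge (1 / T)
  have hnT : 1 ≤ n * T := by rwa [div_le_iff₀ hT] at hn
  have hn0 : n ≠ 0 := by rintro rfl; simp at hnT; linarith
  let t : Fin (n + 1) → ℝ := fun i => i * T
  have ht : Monotone t := fun i j hij => by simp only [t]; gcongr; exact_mod_cast hij
  have hlaw : ∀ i, IdentDistrib (increments A t i) (A T) P P := fun i => by
    convert identDistrib_increments hmeas hstat (by simp [t]) ht i using 2
    simp [t]
    ring
  have hnull : P (⋂ i, increments A t i ⁻¹' {0}) = 0 := by
    refine measure_mono_null ?_ (ae_iff.1 (h0.and (hpos.and hmono)))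
    rintro ω hω ⟨h0ω, h1ω, hmonoω⟩
    simp only [mem_iInter, mem_preimage, mem_singleton_iff] at hω
    have htele := Finset.sum_range_sub (fun k : ℕ => A (k * T) ω) n
    rw [← Fin.sum_univ_eq_sum_range (fun k => A ((k + 1 : ℕ) * T) ω - A (k * T) ω)] at htele
    have hsum : ∑ i : Fin n, (A (((i : ℕ) + 1 : ℕ) * T) ω - A ((i : ℕ) * T) ω) = 0 :=
      Finset.sum_eq_zero fun i _ => by simpa [increments, t] using hω i
    simp only [hsum, CharP.cast_eq_zero, zero_mul, h0ω] at htele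
    linarith [hmonoω 1 (n * T) zero_le_one hnT]
  have hzero : P (A T ⁻¹' {0}) = 0 := by
    rw [(hindep n t (by simp [t]) ht).measure_iInter_preimage_eq_pow hlaw
      (measurableSet_singleton 0), Fintype.card_fin] at hnull
    exact (pow_eq_zero_iff hn0).1 hnull
  filter_upwards [h0, hmono, measure_eq_zero_iff_ae_notMem.1 hzero] with ω h0ω hmonoω hne
  exact (h0ω ▸ hmonoω 0 T le_rfl hT.le).lt_of_ne' hne

theorem integrable_div_of_le [IsFiniteMeasure P] (hmeas : ∀ t, Measurable (A t))
    (h0 : ∀ᵐ ω ∂P, A 0 ω = 0) (hmono : ∀ᵐ ω ∂P, ∀ s t : ℝ, 0 ≤ s → s ≤ t → A s ω ≤ A t ω)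
    {s T : ℝ} (hs : 0 ≤ s) (hsT : s ≤ T) : Integrable (fun ω => A s ω / A T ω) P := by
  refine (integrable_const 1).mono' ((hmeas s).div (hmeas T)).aestronglyMeasurable ?_
  filter_upwards [h0, hmono] with ω h0ω hmonoω
  have hAs : 0 ≤ A s ω := h0ω ▸ hmonoω 0 s le_rfl hs
  rw [Real.norm_of_nonneg (div_nonneg hAs (hAs.trans (hmonoω s T hs hsT)))]
  exact div_le_one_of_le₀ (hmonoω s T hs hsT) (hAs.trans (hmonoω s T hs hsT))

theorem monotoneOn_integral_div [IsFiniteMeasure P] (hmeas : ∀ t, Measurable (A t))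
    (h0 : ∀ᵐ ω ∂P, A 0 ω = 0) (hmono : ∀ᵐ ω ∂P, ∀ s t : ℝ, 0 ≤ s → s ≤ t → A s ω ≤ A t ω)
    (T : ℝ) : MonotoneOn (fun s => ∫ ω, A s ω / A T ω ∂P) (Icc 0 T) := by
  intro s hs u hu hsu
  refine integral_mono_ae (integrable_div_of_le hmeas h0 hmono hs.1 hs.2)
    (integrable_div_of_le hmeas h0 hmono hu.1 hu.2) ?_
  filter_upwards [h0, hmono] with ω h0ω hmonoω
  exact div_le_div_of_nonneg_right (hmonoω s u hs.1 hsu) (h0ω ▸ hmonoω 0 T le_rfl (hu.1.trans hu.2))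

theorem integral_div_add [IsFiniteMeasure P] (hmeas : ∀ t, Measurable (A t))
    (h0 : ∀ᵐ ω ∂P, A 0 ω = 0) (hmono : ∀ᵐ ω ∂P, ∀ s t : ℝ, 0 ≤ s → s ≤ t → A s ω ≤ A t ω)
    (hindep : HasIndepIncrementsOnNonneg A P) (hstat : HasStationaryIncrements A P)
    {s u T : ℝ} (hs : 0 ≤ s) (hu : 0 ≤ u) (hsuT : s + u ≤ T) :
    ∫ ω, A (s + u) ω / A T ω ∂P = ∫ ω, A s ω / A T ω ∂P + ∫ ω, A u ω / A T ω ∂P := by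
  have hsub : ∫ ω, (A (s + u) ω - A s ω) / A T ω ∂P
      = ∫ ω, A (s + u) ω / A T ω ∂P - ∫ ω, A s ω / A T ω ∂P := by
    simp_rw [sub_div]
    exact integral_sub (integrable_div_of_le hmeas h0 hmono (by linarith) hsuT)
      (integrable_div_of_le hmeas h0 hmono hs (by linarith))
  rw [← integral_increment_div_eq hmeas h0 hindep hstat hs hu hsuT, hsub]
  ring

end Subordinator

/-- Proposition 3.10 for subordinators: if `(A_s)` starts at `0`, is almost
surely nondecreasing, has stationary independent increments, and `A₁ > 0`
almost surely, then `E[A_a / A_{a+b}] = a/(a+b)` for all `a, b > 0`. -/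
theorem subordinator_ratio_expectation
    {Ω : Type*} [MeasurableSpace Ω] (P : Measure Ω) [IsProbabilityMeasure P]
    (A : ℝ → Ω → ℝ)
    (hmeas : ∀ t : ℝ, Measurable (A t))
    (h0 : ∀ᵐ ω ∂P, A 0 ω = 0)
    (hmono : ∀ᵐ ω ∂P, ∀ s t : ℝ, 0 ≤ s → s ≤ t → A s ω ≤ A t ω)
    (hindep : ∀ (n : ℕ) (t : Fin (n + 1) → ℝ), 0 ≤ t 0 → Monotone t →
      iIndepFun
        (fun i : Fin n => fun ω => A (t i.succ) ω - A (t i.castSucc) ω) P)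
    (hstat : ∀ s t : ℝ, 0 ≤ s → s ≤ t →
      Measure.map (fun ω => A t ω - A s ω) P = Measure.map (A (t - s)) P)
    (hpos : ∀ᵐ ω ∂P, 0 < A 1 ω) :
    ∀ a b : ℝ, 0 < a → 0 < b →
      ∫ ω, A a ω / A (a + b) ω ∂P = a / (a + b) := by
  intro a b ha hb
  have hT : 0 < a + b := by linarith
  have hself : ∫ ω, A (a + b) ω / A (a + b) ω ∂P = 1 := by
    rw [integral_congr_ae (g := fun _ => (1 : ℝ)), integral_const, probReal_univ, smul_eq_mul,
      mul_one]
    filter_upwards [ae_pos_of_ae_pos_one hmeas h0 hmono hindep hstat hpos hT] with ω hω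
    exact div_self hω.ne'
  have hlin := eq_div_mul_of_monotoneOn_of_map_add hT (monotoneOn_integral_div hmeas h0 hmono _)
    (fun s u hs hu hsu => integral_div_add hmeas h0 hmono hindep hstat hs hu hsu)
    (a := a) ⟨ha.le, by linarith⟩
  rwa [hself, mul_one] at hlin
end

section
/- Fix α ∈ (1,2) and define, for δ ∈ (0,1/2), g_α(δ) = ∫_δ^{1/2} (x^{2α−1} + (1−x)^{2α−1} − 1) · x^{−α−1} (1−x)^{−α−1} dx + ((2α−1)/(α−1)) · δ^{1−α}. Then there exists a real number I_α such that g_α(δ) → I_α as δ → 0⁺, and I_α = 0 if and only if α = 3/2. -/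
open Filter Set MeasureTheory intervalIntegral

noncomputable section DriftAux

/-- integrand of the beta-type primitive -/
def dg0 (α : ℝ) (t : ℝ) : ℝ := t ^ (1 - α) * (1 - t) ^ (1 - α)

/-- primitive of `dg0` -/
def dP (α : ℝ) (x : ℝ) : ℝ := ∫ t in (0:ℝ)..x, dg0 α t

def dc (α : ℝ) : ℝ := (4 * α - 2) / (α * (α - 1))

def dcP (α : ℝ) : ℝ := ((4 * α - 2) * (6 - 4 * α)) / (α * (α - 1))

/-- the integrand of the drift integral -/
def dF (α : ℝ) (x : ℝ) : ℝ :=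
  (x ^ (2 * α - 1) + (1 - x) ^ (2 * α - 1) - 1) * (x ^ (-α - 1) * (1 - x) ^ (-α - 1))

/-- explicit antiderivative of `dF` -/
def dPhi (α : ℝ) (x : ℝ) : ℝ :=
  x ^ (α - 1) * (1 - x) ^ (1 - α) / (α - 1) + x ^ α * (1 - x) ^ (-α) / α
    - x ^ (1 - α) * (1 - x) ^ (α - 1) / (α - 1) - x ^ (-α) * (1 - x) ^ α / α
    + 1 / α * (x ^ (-α) * ((1 - x) ^ (-α) * (1 - 2 * x)))
    + dc α * (x ^ (1 - α) * ((1 - x) ^ (1 - α) * (1 - 2 * x)))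
    + dcP α * dP α x

/-- rescaled boundary remainder -/
def dPsi (α : ℝ) (t : ℝ) : ℝ :=
  (2 * α - 1) / (α - 1) * t + t * (1 - t) ^ (α - 1) / (α - 1) + (1 - t) ^ α / α
    - 1 / α * ((1 - t) ^ (-α) * (1 - 2 * t))
    - dc α * (t * ((1 - t) ^ (1 - α) * (1 - 2 * t)))

/-- derivative of `dPsi` -/
def dchi (α : ℝ) (t : ℝ) : ℝ :=
  (2 * α - 1) / (α - 1) * 1
    + (1 * (1 - t) ^ (α - 1) + t * -((α - 1) * (1 - t) ^ (α - 1 - 1))) / (α - 1)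
    + -(α * (1 - t) ^ (α - 1)) / α
    - 1 / α * (-((-α) * (1 - t) ^ (-α - 1)) * (1 - 2 * t) + (1 - t) ^ (-α) * -(2 * 1))
    - dc α * (1 * ((1 - t) ^ (1 - α) * (1 - 2 * t))
        + t * (-((1 - α) * (1 - t) ^ (1 - α - 1)) * (1 - 2 * t) + (1 - t) ^ (1 - α) * -(2 * 1)))

lemma homx {t : ℝ} (ht : t < 1) (p : ℝ) :
    HasDerivAt (fun y : ℝ => (1 - y) ^ p) (-(p * (1 - t) ^ (p - 1))) t := by
  have h1 : HasDerivAt (fun y : ℝ => 1 - y) (-1) t := by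
    simpa using (hasDerivAt_id t).const_sub 1
  have h2 : HasDerivAt (fun u : ℝ => u ^ p) (p * (1 - t) ^ (p - 1)) (1 - t) :=
    Real.hasDerivAt_rpow_const (Or.inl (by linarith))
  simpa [Function.comp_def, mul_comm] using h2.comp t h1

lemma hxp {x : ℝ} (hx : 0 < x) (p : ℝ) :
    HasDerivAt (fun y : ℝ => y ^ p) (p * x ^ (p - 1)) x :=
  Real.hasDerivAt_rpow_const (Or.inl hx.ne')

lemma hlin {t : ℝ} : HasDerivAt (fun y : ℝ => 1 - 2 * y) (-(2 * 1)) t :=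
  ((hasDerivAt_id t).const_mul 2).const_sub 1

lemma dPsi_hasDeriv (α : ℝ) {t : ℝ} (ht : t < 1) :
    HasDerivAt (dPsi α) (dchi α t) t := by
  unfold dPsi dchi
  exact (((((hasDerivAt_id t).const_mul ((2 * α - 1) / (α - 1))).add
      (((hasDerivAt_id t).mul (homx ht (α - 1))).div_const (α - 1))).add
      ((homx ht α).div_const α)).sub
      (((homx ht (-α)).mul hlin).const_mul (1 / α))).sub
      (((hasDerivAt_id t).mul ((homx ht (1 - α)).mul hlin)).const_mul (dc α))

lemma dchi_zero {α : ℝ} (hα1 : 1 < α) (hα2 : α < 2) : dchi α 0 = 0 := by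
  have hα0 : α ≠ 0 := by linarith
  have hαm : α - 1 ≠ 0 := by linarith
  unfold dchi dc
  simp only [Real.one_rpow, sub_zero, mul_one, mul_zero, zero_mul, one_mul]
  field_simp
  ring

lemma dchi_diff (α : ℝ) : ∃ m : ℝ, HasDerivAt (dchi α) m 0 := by
  have h0 : (0:ℝ) < 1 := one_pos
  have t1 := hasDerivAt_const (0:ℝ) ((2 * α - 1) / (α - 1) * 1)
  have t2 := (((hasDerivAt_const (0:ℝ) (1:ℝ)).mul (homx h0 (α - 1))).add
    ((hasDerivAt_id (0:ℝ)).mul ((homx h0 (α - 1 - 1)).const_mul (α - 1)).neg)).div_const (α - 1)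
  have t3 := ((homx h0 (α - 1)).const_mul α).neg.div_const α
  have t4 := (((((homx h0 (-α - 1)).const_mul (-α)).neg.mul hlin).add
    ((homx h0 (-α)).mul (hasDerivAt_const (0:ℝ) (-(2 * 1))))).const_mul (1 / α))
  have t5 := (((hasDerivAt_const (0:ℝ) (1:ℝ)).mul ((homx h0 (1 - α)).mul hlin)).add
    ((hasDerivAt_id (0:ℝ)).mul
      ((((homx h0 (1 - α - 1)).const_mul (1 - α)).neg.mul hlin).add
        ((homx h0 (1 - α)).mul (hasDerivAt_const (0:ℝ) (-(2 * 1))))))).const_mul (dc α)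
  have H := (((t1.add t2).add t3).sub t4).sub t5
  exact ⟨_, H⟩

lemma dPsi_zero {α : ℝ} : dPsi α 0 = 0 := by
  unfold dPsi
  simp [Real.one_rpow]

lemma contAt_dg0 {α x : ℝ} (hx0 : x ≠ 0) (hx1 : x ≠ 1) : ContinuousAt (dg0 α) x := by
  unfold dg0
  exact (continuousAt_id.rpow_const (Or.inl hx0)).mul
    ((continuousAt_const.sub continuousAt_id).rpow_const (Or.inl (by
      simp only [Pi.sub_apply, id_eq]; intro h; apply hx1; linarith [sub_eq_zero.mp h])))

lemma contAt_dF {α x : ℝ} (hx0 : x ≠ 0) (hx1 : x ≠ 1) : ContinuousAt (dF α) x := by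
  unfold dF
  have h1 : (1 : ℝ) - id x ≠ 0 := by
    simp only [id_eq]; intro h; exact hx1 (by linarith [sub_eq_zero.mp h])
  exact (((continuousAt_id.rpow_const (Or.inl hx0)).add
      ((continuousAt_const.sub continuousAt_id).rpow_const (Or.inl h1))).sub
      continuousAt_const).mul
    ((continuousAt_id.rpow_const (Or.inl hx0)).mul
      ((continuousAt_const.sub continuousAt_id).rpow_const (Or.inl h1)))

lemma dg0_le {α : ℝ} (hα1 : 1 < α) (hα2 : α < 2) {t : ℝ} (ht : t ∈ Icc (0:ℝ) (1/2)) :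
    dg0 α t ≤ 2 * t ^ (1 - α) := by
  rcases eq_or_lt_of_le ht.1 with h | h
  · unfold dg0
    rw [← h, Real.zero_rpow (by linarith)]
    simp
  · have h2 : (1 - t) ^ (1 - α) ≤ 2 := by
      have ha : (1 - t) ^ (1 - α) ≤ ((1:ℝ)/2) ^ (1 - α) :=
        Real.rpow_le_rpow_of_nonpos (by norm_num) (by linarith [ht.2]) (by linarith)
      have hb : ((1:ℝ)/2) ^ (1 - α) = 2 ^ (α - 1) := by
        rw [one_div, Real.inv_rpow (by norm_num : (0:ℝ) ≤ 2), ← Real.rpow_neg (by norm_num),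
          neg_sub]
      have hc : (2:ℝ) ^ (α - 1) ≤ 2 ^ (1:ℝ) :=
        Real.rpow_le_rpow_of_exponent_le one_le_two (by linarith)
      rw [Real.rpow_one] at hc
      linarith
    calc dg0 α t = t ^ (1 - α) * (1 - t) ^ (1 - α) := rfl
      _ ≤ t ^ (1 - α) * 2 := by
          exact mul_le_mul_of_nonneg_left h2 (Real.rpow_nonneg h.le _)
      _ = 2 * t ^ (1 - α) := mul_comm _ _

lemma dg0_nonneg {α : ℝ} {t : ℝ} (ht : 0 ≤ t) (ht1 : t ≤ 1) : 0 ≤ dg0 α t :=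
  mul_nonneg (Real.rpow_nonneg ht _) (Real.rpow_nonneg (by linarith) _)

lemma int_dom {α : ℝ} (hα2 : α < 2) (a b : ℝ) :
    IntervalIntegrable (fun t : ℝ => 2 * t ^ (1 - α)) MeasureTheory.volume a b :=
  (intervalIntegral.intervalIntegrable_rpow' (by linarith)).const_mul 2

lemma int_g0_half {α : ℝ} (hα1 : 1 < α) (hα2 : α < 2) :
    IntervalIntegrable (dg0 α) MeasureTheory.volume 0 (1/2) := by
  refine (int_dom hα2 0 (1/2)).mono_fun ?_ ?_
  · have hc : ContinuousOn (dg0 α) (Ioc (0:ℝ) (1/2)) := fun t ht =>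
      (contAt_dg0 (ne_of_gt ht.1) (by intro h; rw [h] at ht; norm_num at ht)).continuousWithinAt
    rw [Set.uIoc_of_le (by norm_num : (0:ℝ) ≤ 1/2)]
    exact hc.aestronglyMeasurable measurableSet_Ioc
  · rw [Set.uIoc_of_le (by norm_num : (0:ℝ) ≤ 1/2)]
    refine (MeasureTheory.ae_restrict_iff' measurableSet_Ioc).2 (Eventually.of_forall ?_)
    intro t ht
    have h0 : 0 ≤ dg0 α t := dg0_nonneg ht.1.le (by linarith [ht.2])
    have h1 : 0 ≤ t ^ (1 - α) := Real.rpow_nonneg ht.1.le _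
    simp only [Real.norm_eq_abs]
    rw [abs_of_nonneg h0, abs_of_nonneg (by positivity : (0:ℝ) ≤ 2 * t ^ (1 - α))]
    exact dg0_le hα1 hα2 ⟨ht.1.le, ht.2⟩

lemma int_g0_sub {α : ℝ} (hα1 : 1 < α) (hα2 : α < 2) {x : ℝ} (hx0 : 0 ≤ x) (hx : x ≤ 1/2) :
    IntervalIntegrable (dg0 α) MeasureTheory.volume 0 x :=
  (int_g0_half hα1 hα2).mono_set (by
    rw [Set.uIcc_of_le hx0, Set.uIcc_of_le (by norm_num : (0:ℝ) ≤ 1/2)]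
    exact Set.Icc_subset_Icc le_rfl hx)

lemma hP_deriv {α : ℝ} (hα1 : 1 < α) (hα2 : α < 2) {x : ℝ} (hx : 0 < x) (hx2 : x ≤ 1/2) :
    HasDerivAt (dP α) (dg0 α x) x := by
  refine intervalIntegral.integral_hasDerivAt_right (int_g0_sub hα1 hα2 hx.le hx2) ?_ ?_
  · refine ContinuousAt.stronglyMeasurableAtFilter (s := Set.Ioo (0:ℝ) 1) isOpen_Ioo ?_ x
      ⟨hx, by linarith⟩
    · intro y hy
      exact contAt_dg0 (ne_of_gt hy.1) (ne_of_lt hy.2)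
  · exact contAt_dg0 hx.ne' (by linarith)

lemma dPhi_hasDeriv {α : ℝ} (hα1 : 1 < α) (hα2 : α < 2) {x : ℝ} (hx : 0 < x) (hx2 : x ≤ 1/2) :
    HasDerivAt (dPhi α) (dF α x) x := by
  have hx1 : x < 1 := by linarith
  have h1x : (0:ℝ) < 1 - x := by linarith
  have hP := hP_deriv hα1 hα2 hx hx2
  have t1 := ((hxp hx (α - 1)).mul (homx hx1 (1 - α))).div_const (α - 1)
  have t2 := ((hxp hx α).mul (homx hx1 (-α))).div_const α
  have t3 := ((hxp hx (1 - α)).mul (homx hx1 (α - 1))).div_const (α - 1)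
  have t4 := ((hxp hx (-α)).mul (homx hx1 α)).div_const α
  have t5 := ((hxp hx (-α)).mul ((homx hx1 (-α)).mul hlin)).const_mul (1/α)
  have t6 := ((hxp hx (1 - α)).mul ((homx hx1 (1 - α)).mul hlin)).const_mul (dc α)
  have t7 := hP.const_mul (dcP α)
  have H := (((((t1.add t2).sub t3).sub t4).add t5).add t6).add t7
  have hD : HasDerivAt (dPhi α) (dF α x) x := by
    refine H.congr_deriv ?_
    have hα0 : α ≠ 0 := by linarith
    have hαm : α - 1 ≠ 0 := by linarith
    have hxne : x ≠ 0 := hx.ne'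
    have h1xne : (1:ℝ) - x ≠ 0 := h1x.ne'
    have hax : (0:ℝ) < x ^ α := Real.rpow_pos_of_pos hx α
    have hbx : (0:ℝ) < (1 - x) ^ α := Real.rpow_pos_of_pos h1x α
    have ea1 : x ^ (α - 1) = x ^ α / x := by rw [Real.rpow_sub hx, Real.rpow_one]
    have ea2 : x ^ (α - 1 - 1) = x ^ α / x / x := by
      rw [Real.rpow_sub hx, Real.rpow_sub hx, Real.rpow_one]
    have ea3 : x ^ (1 - α) = x / x ^ α := by rw [Real.rpow_sub hx, Real.rpow_one]
    have ea4 : x ^ (1 - α - 1) = x / x ^ α / x := by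
      rw [Real.rpow_sub hx, Real.rpow_sub hx, Real.rpow_one]
    have ea5 : x ^ (-α) = 1 / x ^ α := by rw [Real.rpow_neg hx.le, inv_eq_one_div]
    have ea6 : x ^ (-α - 1) = 1 / x ^ α / x := by
      rw [Real.rpow_sub hx, Real.rpow_one, Real.rpow_neg hx.le, inv_eq_one_div]
    have ea7 : x ^ (2 * α - 1) = x ^ α * x ^ α / x := by
      rw [Real.rpow_sub hx, Real.rpow_one, show 2 * α = α + α by ring, Real.rpow_add hx]
    have eb1 : (1 - x) ^ (α - 1) = (1 - x) ^ α / (1 - x) := by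
      rw [Real.rpow_sub h1x, Real.rpow_one]
    have eb2 : (1 - x) ^ (α - 1 - 1) = (1 - x) ^ α / (1 - x) / (1 - x) := by
      rw [Real.rpow_sub h1x, Real.rpow_sub h1x, Real.rpow_one]
    have eb3 : (1 - x) ^ (1 - α) = (1 - x) / (1 - x) ^ α := by
      rw [Real.rpow_sub h1x, Real.rpow_one]
    have eb4 : (1 - x) ^ (1 - α - 1) = (1 - x) / (1 - x) ^ α / (1 - x) := by
      rw [Real.rpow_sub h1x, Real.rpow_sub h1x, Real.rpow_one]
    have eb5 : (1 - x) ^ (-α) = 1 / (1 - x) ^ α := by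
      rw [Real.rpow_neg h1x.le, inv_eq_one_div]
    have eb6 : (1 - x) ^ (-α - 1) = 1 / (1 - x) ^ α / (1 - x) := by
      rw [Real.rpow_sub h1x, Real.rpow_one, Real.rpow_neg h1x.le, inv_eq_one_div]
    have eb7 : (1 - x) ^ (2 * α - 1) = (1 - x) ^ α * (1 - x) ^ α / (1 - x) := by
      rw [Real.rpow_sub h1x, Real.rpow_one, show 2 * α = α + α by ring, Real.rpow_add h1x]
    unfold dF dg0 dc dcP
    simp only [Pi.mul_apply]
    rw [ea2, ea1, ea4, ea3, ea6, ea5, ea7, eb2, eb1, eb4, eb3, eb6, eb5, eb7]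
    field_simp
    ring
  exact hD

lemma key_eq {α : ℝ} (hα1 : 1 < α) (hα2 : α < 2) {δ : ℝ} (hδ : 0 < δ) (hδ2 : δ < 1/2) :
    (∫ x in δ..(1 / 2 : ℝ),
        (x ^ (2 * α - 1) + (1 - x) ^ (2 * α - 1) - 1) *
          (x ^ (-α - 1) * (1 - x) ^ (-α - 1)))
      = dPhi α (1/2) - dPhi α δ := by
  have h : (∫ x in δ..(1 / 2 : ℝ), dF α x) = dPhi α (1/2) - dPhi α δ := by
    refine intervalIntegral.integral_eq_sub_of_hasDerivAt ?_ ?_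
    · intro x hx
      rw [Set.uIcc_of_le hδ2.le] at hx
      exact dPhi_hasDeriv hα1 hα2 (lt_of_lt_of_le hδ hx.1) hx.2
    · refine ContinuousOn.intervalIntegrable ?_
      rw [Set.uIcc_of_le hδ2.le]
      intro x hx
      exact (contAt_dF (ne_of_gt (lt_of_lt_of_le hδ hx.1))
        (by intro h; rw [h] at hx; linarith [hx.2])).continuousWithinAt
  exact h

lemma dPhi_half {α : ℝ} (hα1 : 1 < α) (hα2 : α < 2) :
    dPhi α (1/2) = dcP α * dP α (1/2) := by
  have E : ∀ p q : ℝ, p + q = 0 → ((1:ℝ)/2) ^ p * ((1:ℝ)/2) ^ q = 1 := by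
    intro p q h
    rw [← Real.rpow_add (by norm_num : (0:ℝ) < 1/2), h, Real.rpow_zero]
  unfold dPhi
  rw [show (1:ℝ) - 1/2 = 1/2 by norm_num, show (1:ℝ) - 2 * (1/2) = 0 by norm_num]
  rw [E (α - 1) (1 - α) (by ring), E α (-α) (by ring), E (1 - α) (α - 1) (by ring),
    E (-α) α (by ring)]
  ring

lemma rem_eq {α : ℝ} {δ : ℝ} (hδ : 0 < δ) :
    (2 * α - 1) / (α - 1) * δ ^ (1 - α) - dPhi α δ
      = δ ^ (-α) * dPsi α δ - δ ^ (α - 1) * (1 - δ) ^ (1 - α) / (α - 1)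
        - δ ^ α * (1 - δ) ^ (-α) / α - dcP α * dP α δ := by
  have h1 : δ ^ (1 - α) = δ ^ (-α) * δ := by
    rw [show (1:ℝ) - α = -α + 1 by ring, Real.rpow_add hδ, Real.rpow_one]
  unfold dPhi dPsi
  rw [h1]
  ring

lemma rpow_tendsto0 {p : ℝ} (hp : 0 < p) :
    Tendsto (fun δ : ℝ => δ ^ p) (nhdsWithin 0 (Set.Ioi 0)) (nhds 0) := by
  have h := (Real.continuousAt_rpow_const 0 p (Or.inr hp.le)).tendsto
  rw [Real.zero_rpow hp.ne'] at h
  exact h.mono_left nhdsWithin_le_nhds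

lemma omx_tendsto1 (q : ℝ) :
    Tendsto (fun δ : ℝ => (1 - δ) ^ q) (nhdsWithin 0 (Set.Ioi 0)) (nhds 1) := by
  have h : ContinuousAt (fun δ : ℝ => (1 - δ) ^ q) 0 :=
    (continuousAt_const.sub continuousAt_id).rpow_const (Or.inl (by norm_num))
  have h2 := h.tendsto
  norm_num [Real.one_rpow] at h2
  exact h2.mono_left nhdsWithin_le_nhds

lemma bdry_tendsto0 {p : ℝ} (hp : 0 < p) (q c : ℝ) :
    Tendsto (fun δ : ℝ => δ ^ p * (1 - δ) ^ q / c) (nhdsWithin 0 (Set.Ioi 0)) (nhds 0) := by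
  have h := ((rpow_tendsto0 hp).mul (omx_tendsto1 q)).div_const c
  simpa using h

lemma hP0 {α : ℝ} (hα1 : 1 < α) (hα2 : α < 2) :
    Tendsto (dP α) (nhdsWithin 0 (Set.Ioi 0)) (nhds 0) := by
  have h2α : (0:ℝ) < 2 - α := by linarith
  refine squeeze_zero' (g := fun δ => 2 * (δ ^ (1 - α + 1) / (1 - α + 1))) ?_ ?_ ?_
  · filter_upwards [Ioo_mem_nhdsGT_of_mem (show (0:ℝ) ∈ Ico (0:ℝ) (1/2) by norm_num)]
      with δ hδ
    exact intervalIntegral.integral_nonneg hδ.1.le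
      (fun t ht => dg0_nonneg ht.1 (by linarith [ht.2, hδ.2]))
  · filter_upwards [Ioo_mem_nhdsGT_of_mem (show (0:ℝ) ∈ Ico (0:ℝ) (1/2) by norm_num)]
      with δ hδ
    have hint1 := int_g0_sub hα1 hα2 hδ.1.le hδ.2.le
    have hint2 := int_dom hα2 0 δ
    have hmono := intervalIntegral.integral_mono_on hδ.1.le hint1 hint2
      (fun t ht => dg0_le hα1 hα2 ⟨ht.1, le_trans ht.2 hδ.2.le⟩)
    have hval : (∫ t in (0:ℝ)..δ, 2 * t ^ (1 - α)) = 2 * (δ ^ (1 - α + 1) / (1 - α + 1)) := by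
      rw [intervalIntegral.integral_const_mul, integral_rpow (Or.inl (by linarith))]
      rw [Real.zero_rpow (by linarith : (1:ℝ) - α + 1 ≠ 0)]
      ring
    calc dP α δ ≤ ∫ t in (0:ℝ)..δ, 2 * t ^ (1 - α) := hmono
      _ = 2 * (δ ^ (1 - α + 1) / (1 - α + 1)) := hval
  · have h := ((rpow_tendsto0 (show (0:ℝ) < 1 - α + 1 by linarith)).div_const
      (1 - α + 1)).const_mul 2
    simpa using h

lemma hPpos {α : ℝ} (hα1 : 1 < α) (hα2 : α < 2) : 0 < dP α (1/2) := by
  refine intervalIntegral.intervalIntegral_pos_of_pos_on (int_g0_half hα1 hα2) ?_ (by norm_num)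
  intro t ht
  exact mul_pos (Real.rpow_pos_of_pos ht.1 _)
    (Real.rpow_pos_of_pos (by linarith [ht.2]) _)

lemma hA4 {α : ℝ} (hα1 : 1 < α) (hα2 : α < 2) :
    Tendsto (fun δ : ℝ => δ ^ (-α) * dPsi α δ) (nhdsWithin 0 (Set.Ioi 0)) (nhds 0) := by
  obtain ⟨m, hm⟩ := dchi_diff α
  have hslope := hasDerivAt_iff_tendsto_slope.1 hm
  have hball := Metric.tendsto_nhds.mp hslope 1 one_pos
  have hmono : nhdsWithin (0:ℝ) (Set.Ioi 0) ≤ nhdsWithin (0:ℝ) {(0:ℝ)}ᶜ :=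
    nhdsWithin_mono 0 (fun x hx => ne_of_gt hx)
  have hev : ∀ᶠ t in nhdsWithin (0:ℝ) (Set.Ioi 0), |dchi α t| ≤ (|m| + 1) * t := by
    filter_upwards [hball.filter_mono hmono, self_mem_nhdsWithin] with t ht hpos
    have hpos' : (0:ℝ) < t := hpos
    have hsl : slope (dchi α) 0 t = dchi α t / t := by
      rw [slope_def_field, dchi_zero hα1 hα2, sub_zero, sub_zero]
    rw [hsl, Real.dist_eq] at ht
    have h1 : |dchi α t / t| ≤ |m| + 1 := by
      have := abs_sub_abs_le_abs_sub (dchi α t / t) m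
      linarith [ht.le]
    have h2 : |dchi α t| = |dchi α t / t| * t := by
      rw [abs_div, abs_of_pos hpos']
      field_simp
    rw [h2]
    exact mul_le_mul_of_nonneg_right h1 hpos'.le
  obtain ⟨u, hu, hsub⟩ := mem_nhdsGT_iff_exists_Ioo_subset.1 hev
  have hu0 : (0:ℝ) < u := hu
  set K := |m| + 1 with hK
  have hK0 : (0:ℝ) < K := by positivity
  have hbound : ∀ᶠ δ in nhdsWithin (0:ℝ) (Set.Ioi 0),
      ‖δ ^ (-α) * dPsi α δ‖ ≤ K * δ ^ (2 - α) := by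
    filter_upwards [Ioo_mem_nhdsGT_of_mem
      (show (0:ℝ) ∈ Ico (0:ℝ) (min u (1/2)) by
        constructor
        · exact le_refl 0
        · exact lt_min hu0 (by norm_num))] with δ hδ
    have hδ0 : 0 < δ := hδ.1
    have hδu : δ < u := lt_of_lt_of_le hδ.2 (min_le_left _ _)
    have hδh : δ < 1/2 := lt_of_lt_of_le hδ.2 (min_le_right _ _)
    -- MVT on [0, δ]
    have hcont : ContinuousOn (dPsi α) (Icc 0 δ) := by
      intro t ht
      exact (dPsi_hasDeriv α (by linarith [ht.2] : t < 1)).continuousAt.continuousWithinAt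
    have hderiv : ∀ t ∈ Ioo (0:ℝ) δ, HasDerivAt (dPsi α) (dchi α t) t := fun t ht =>
      dPsi_hasDeriv α (by linarith [ht.2])
    obtain ⟨ξ, hξ, hξeq⟩ := exists_hasDerivAt_eq_slope (dPsi α) (dchi α) hδ0 hcont hderiv
    have hΨ : dPsi α δ = dchi α ξ * δ := by
      rw [dPsi_zero, sub_zero, sub_zero] at hξeq
      field_simp at hξeq
      linarith [hξeq]
    have hξbound : |dchi α ξ| ≤ K * ξ := hsub ⟨hξ.1, lt_trans hξ.2 hδu⟩
    have hΨbound : |dPsi α δ| ≤ K * (δ * δ) := by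
      rw [hΨ, abs_mul, abs_of_pos hδ0]
      calc |dchi α ξ| * δ ≤ (K * ξ) * δ :=
            mul_le_mul_of_nonneg_right hξbound hδ0.le
        _ ≤ (K * δ) * δ :=
            mul_le_mul_of_nonneg_right
              (mul_le_mul_of_nonneg_left hξ.2.le hK0.le) hδ0.le
        _ = K * (δ * δ) := by ring
    have hpow : δ ^ (-α) * (δ * δ) = δ ^ (2 - α) := by
      rw [show (2:ℝ) - α = -α + 1 + 1 by ring, Real.rpow_add hδ0, Real.rpow_add hδ0,
        Real.rpow_one]
      ring
    have hpos : (0:ℝ) < δ ^ (-α) := Real.rpow_pos_of_pos hδ0 _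
    rw [Real.norm_eq_abs, abs_mul, abs_of_pos hpos]
    calc δ ^ (-α) * |dPsi α δ| ≤ δ ^ (-α) * (K * (δ * δ)) :=
          mul_le_mul_of_nonneg_left hΨbound hpos.le
      _ = K * (δ ^ (-α) * (δ * δ)) := by ring
      _ = K * δ ^ (2 - α) := by rw [hpow]
  refine squeeze_zero_norm' hbound ?_
  have h := (rpow_tendsto0 (show (0:ℝ) < 2 - α by linarith)).const_mul K
  simpa using h

end DriftAux

open Filter

/-- Proposition 4.22 (drift integral): for `α ∈ (1,2)`, the quantity
`g_α(δ) = ∫_δ^{1/2} (x^{2α-1} + (1-x)^{2α-1} - 1) x^{-α-1} (1-x)^{-α-1} dx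
  + ((2α-1)/(α-1)) δ^{1-α}`
converges as `δ → 0⁺` to a limit `I_α`, and `I_α = 0` if and only if
`α = 3/2`. -/
theorem drift_integral_limit_vanishes_iff
    (α : ℝ) (hα1 : 1 < α) (hα2 : α < 2) :
    ∃ I : ℝ,
      Tendsto (fun δ : ℝ =>
          (∫ x in δ..(1 / 2 : ℝ),
            (x ^ (2 * α - 1) + (1 - x) ^ (2 * α - 1) - 1) *
              (x ^ (-α - 1) * (1 - x) ^ (-α - 1)))
            + ((2 * α - 1) / (α - 1)) * δ ^ (1 - α))
        (nhdsWithin 0 (Set.Ioi 0)) (nhds I) ∧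
      (I = 0 ↔ α = 3 / 2) := by
  refine ⟨dcP α * dP α (1/2), ?_, ?_⟩
  · -- the limit
    have heq : ∀ᶠ δ in nhdsWithin (0:ℝ) (Set.Ioi 0),
        dcP α * dP α (1/2)
          + (δ ^ (-α) * dPsi α δ - δ ^ (α - 1) * (1 - δ) ^ (1 - α) / (α - 1)
            - δ ^ α * (1 - δ) ^ (-α) / α - dcP α * dP α δ)
        = (∫ x in δ..(1 / 2 : ℝ),
            (x ^ (2 * α - 1) + (1 - x) ^ (2 * α - 1) - 1) *
              (x ^ (-α - 1) * (1 - x) ^ (-α - 1)))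
            + ((2 * α - 1) / (α - 1)) * δ ^ (1 - α) := by
      filter_upwards [Ioo_mem_nhdsGT_of_mem
        (show (0:ℝ) ∈ Set.Ico (0:ℝ) (1/2) by norm_num)] with δ hδ
      rw [key_eq hα1 hα2 hδ.1 hδ.2, dPhi_half hα1 hα2, ← rem_eq hδ.1]
      ring
    have hT : Tendsto (fun δ : ℝ =>
        dcP α * dP α (1/2)
          + (δ ^ (-α) * dPsi α δ - δ ^ (α - 1) * (1 - δ) ^ (1 - α) / (α - 1)
            - δ ^ α * (1 - δ) ^ (-α) / α - dcP α * dP α δ))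
        (nhdsWithin 0 (Set.Ioi 0)) (nhds (dcP α * dP α (1/2))) := by
      have h1 := hA4 hα1 hα2
      have h2 := bdry_tendsto0 (show (0:ℝ) < α - 1 by linarith) (1 - α) (α - 1)
      have h3 := bdry_tendsto0 (show (0:ℝ) < α by linarith) (-α) α
      have h4 := (hP0 hα1 hα2).const_mul (dcP α)
      have h0 : Tendsto (fun _ : ℝ => dcP α * dP α (1/2)) (nhdsWithin (0:ℝ) (Set.Ioi 0))
          (nhds (dcP α * dP α (1/2))) := tendsto_const_nhds
      have h := h0.add (((h1.sub h2).sub h3).sub h4)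
      simpa using h
    exact hT.congr' heq
  · -- vanishing iff
    have hp := hPpos hα1 hα2
    constructor
    · intro h
      have hcP : dcP α = 0 := by
        rcases mul_eq_zero.1 h with h' | h'
        · exact h'
        · exact absurd h' hp.ne'
      unfold dcP at hcP
      have hden : α * (α - 1) ≠ 0 := by
        have : (0:ℝ) < α * (α - 1) := mul_pos (by linarith) (by linarith)
        exact this.ne'
      rw [div_eq_zero_iff] at hcP
      rcases hcP with h' | h'
      · rcases mul_eq_zero.1 h' with h'' | h''
        · linarith
        · linarith
      · exact absurd h' hden
    · intro h
      subst h
      unfold dcP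
      norm_num
end

section
/- Fix α ∈ (1,2), t > 0 and y₀ ≥ 0. Let W be a nonnegative real random variable on a probability space such that for every λ > 0, E[exp(−λW)] = exp(−y₀ · (λ^{1−α} + (α−1)t)^{1/(1−α)}). Then P[W > 0] = 1 − exp(−y₀ · ((α−1)t)^{1/(1−α)}). -/
open MeasureTheory Filter Real
set_option maxHeartbeats 1000000

/-- Lemma 3.8 (csbp_extinction_time), stated via the Laplace transform: if a
nonnegative random variable `W` satisfies
`E[exp(-λW)] = exp(-y₀ (λ^{1-α} + (α-1)t)^{1/(1-α)})` for all `λ > 0`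
(the Laplace transform of an `α`-stable CSBP at time `t` started from `y₀`),
then `P[W > 0] = 1 - exp(-y₀ ((α-1)t)^{1/(1-α)})`. -/
theorem csbp_extinction_probability
    {Ω : Type*} [MeasurableSpace Ω] (P : Measure Ω) [IsProbabilityMeasure P]
    (α t y₀ : ℝ) (hα1 : 1 < α) (hα2 : α < 2) (ht : 0 < t) (hy : 0 ≤ y₀)
    (W : Ω → ℝ) (hW : Measurable W) (hWnonneg : ∀ᵐ ω ∂P, 0 ≤ W ω)
    (hlap : ∀ lam : ℝ, 0 < lam →
      ∫ ω, Real.exp (-lam * W ω) ∂P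
        = Real.exp (-y₀ * (lam ^ (1 - α) + (α - 1) * t) ^ (1 / (1 - α)))) :
    P {ω | 0 < W ω}
      = ENNReal.ofReal (1 - Real.exp (-y₀ * ((α - 1) * t) ^ (1 / (1 - α)))) := by
  set c : ℝ := ((α - 1) * t) ^ (1 / (1 - α)) with hc
  have hαt : (0:ℝ) < (α - 1) * t := mul_pos (by linarith) ht
  set s : Set Ω := {ω | W ω = 0} with hs
  have hsm : MeasurableSet s := hW (measurableSet_singleton 0)
  -- limit of the Laplace transform as λ → ∞ via the explicit formula
  have hlim1 : Tendsto (fun n : ℕ => ∫ ω, Real.exp (-((n:ℝ)+1) * W ω) ∂P)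
      atTop (nhds (Real.exp (-y₀ * c))) := by
    have heq : (fun n : ℕ => ∫ ω, Real.exp (-((n:ℝ)+1) * W ω) ∂P)
        = fun n : ℕ => Real.exp (-y₀ * (((n:ℝ)+1) ^ (1 - α) + (α - 1) * t) ^ (1 / (1 - α))) := by
      funext n
      exact hlap _ (by positivity)
    rw [heq]
    have h1 : Tendsto (fun n : ℕ => ((n:ℝ)+1) ^ (1 - α)) atTop (nhds 0) := by
      have hx : Tendsto (fun n : ℕ => ((n:ℝ)+1)) atTop atTop :=
        tendsto_atTop_add_const_right _ 1 tendsto_natCast_atTop_atTop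
      have hr : Tendsto (fun x : ℝ => x ^ (-(α-1))) atTop (nhds 0) :=
        tendsto_rpow_neg_atTop (by linarith)
      have := hr.comp hx
      simpa using this.congr (fun n => by norm_num)
    have hcont : ContinuousAt (fun x : ℝ => Real.exp (-y₀ * (x + (α - 1) * t) ^ (1 / (1 - α)))) 0 := by
      apply Real.continuous_exp.continuousAt.comp
      apply ContinuousAt.mul continuousAt_const
      apply ContinuousAt.rpow_const
      · exact (continuous_id.add continuous_const).continuousAt
      · left; simpa using ne_of_gt hαt
    have := hcont.tendsto.comp h1
    simpa [Function.comp_def, hc] using this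
  -- limit via dominated convergence: tends to P(s).toReal
  have hlim2 : Tendsto (fun n : ℕ => ∫ ω, Real.exp (-((n:ℝ)+1) * W ω) ∂P)
      atTop (nhds (∫ ω, s.indicator (fun _ => (1:ℝ)) ω ∂P)) := by
    have hmeas : ∀ n : ℕ, AEStronglyMeasurable (fun ω => Real.exp (-((n:ℝ)+1) * W ω)) P := by
      intro n
      exact ((hW.const_mul (-((n:ℝ)+1))).exp).aestronglyMeasurable
    have hbound : ∀ n : ℕ, ∀ᵐ ω ∂P, ‖Real.exp (-((n:ℝ)+1) * W ω)‖ ≤ (1:ℝ) := by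
      intro n
      filter_upwards [hWnonneg] with ω hω
      rw [Real.norm_eq_abs, abs_of_pos (Real.exp_pos _)]
      apply Real.exp_le_one_iff.mpr
      have : (0:ℝ) ≤ ((n:ℝ)+1) * W ω := mul_nonneg (by positivity) hω
      linarith
    have hpt : ∀ᵐ ω ∂P, Tendsto (fun n : ℕ => Real.exp (-((n:ℝ)+1) * W ω)) atTop
        (nhds (s.indicator (fun _ => (1:ℝ)) ω)) := by
      filter_upwards [hWnonneg] with ω hω
      rcases eq_or_lt_of_le hω with h0 | h0
      · have hωs : ω ∈ s := by simp [hs, ← h0]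
        simp [Set.indicator_of_mem hωs, ← h0]
      · have hωs : ω ∉ s := by simp [hs]; exact ne_of_gt h0
        rw [Set.indicator_of_notMem hωs]
        have hmul : Tendsto (fun n : ℕ => ((n:ℝ)+1) * W ω) atTop atTop :=
          (tendsto_atTop_add_const_right _ 1 tendsto_natCast_atTop_atTop).atTop_mul_const h0
        have : Tendsto (fun n : ℕ => -(((n:ℝ)+1) * W ω)) atTop atBot :=
          tendsto_neg_atTop_atBot.comp hmul
        have hfin := Real.tendsto_exp_atBot.comp this
        exact hfin.congr (fun n => by simp only [Function.comp_apply]; congr 1; ring)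
    exact tendsto_integral_of_dominated_convergence _ hmeas (integrable_const 1) hbound hpt
  have hind : ∫ ω, s.indicator (fun _ => (1:ℝ)) ω ∂P = (P s).toReal := by
    rw [integral_indicator hsm]
    simp
    rfl
  rw [hind] at hlim2
  have hPs : (P s).toReal = Real.exp (-y₀ * c) := tendsto_nhds_unique hlim2 hlim1
  have hPsne : P s ≠ ⊤ := measure_ne_top P s
  have hPs' : P s = ENNReal.ofReal (Real.exp (-y₀ * c)) := by
    rw [← hPs, ENNReal.ofReal_toReal hPsne]
  -- a.e. {W ≤ 0} = {W = 0}
  have hae : {ω | W ω ≤ 0} =ᵐ[P] s := by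
    filter_upwards [hWnonneg] with ω hω
    simp only [hs, Set.mem_setOf_eq, eq_iff_iff]
    constructor
    · intro h; exact le_antisymm h hω
    · intro h; exact le_of_eq h
  have hcompl : {ω | 0 < W ω} = {ω | W ω ≤ 0}ᶜ := by
    ext ω; simp [not_le]
  have hm2 : MeasurableSet {ω | W ω ≤ 0} := hW measurableSet_Iic
  rw [hcompl, measure_compl hm2 (measure_ne_top _ _)]
  rw [measure_congr hae, hPs', measure_univ]
  have hexp : Real.exp (-y₀ * c) ≤ 1 := by
    apply Real.exp_le_one_iff.mpr
    have hc0 : 0 < c := Real.rpow_pos_of_pos hαt _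
    nlinarith
  rw [ENNReal.ofReal_sub _ (Real.exp_pos _).le, ENNReal.ofReal_one]
end
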